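/- Let ψ : ℝ≥0 → ℝ≥0 be non-decreasing and suppose ψ(y) ≤ b^{1/β} y^{1/β} for all y ≥ c, where b, β, c > 0. Define Φ(y) := ∫₀^y ψ(ζ) dζ. Then for all y, ξ ≥ 0: Φ(y + ξ) − Φ(y) ≤ (β/(β+1)) b^{1/β} [ (c + ξ)^{(β+1)/β} − c^{(β+1)/β} + (y + ξ)^{(β+1)/β} − y^{(β+1)/β} ]. -/

import Mathlib

open MeasureTheory intervalIntegral

/-!
On `[y, y + ξ]` monotonicity and the growth bound give `ψ ζ ≤ B · max(c, ζ)^p` with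
`B = b^(1/β)`, `p = 1/β`, and `max(c, ζ) ≤ max(ζ + (c - y), ζ)` since `ζ ≥ y`. Bounding the
maximum of the two powers by their sum and integrating yields the two differences of
`(p + 1)`-th powers, the first one being the second shifted from `y` to `c`.
-/

lemma max_rpow_le_rpow_add_rpow {u v : ℝ} (hu : 0 ≤ u) (hv : 0 ≤ v) (p : ℝ) :
    max u v ^ p ≤ u ^ p + v ^ p := by
  rcases le_total u v with h | h
  · rw [max_eq_right h]
    linarith [Real.rpow_nonneg hu p]
  · rw [max_eq_left h]
    linarith [Real.rpow_nonneg hv p]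

lemma MonotoneOn.le_mul_max_rpow {ψ : ℝ → ℝ} {B p c : ℝ} (hψ : MonotoneOn ψ (Set.Ici 0))
    (hc : 0 ≤ c) (hub : ∀ y, c ≤ y → ψ y ≤ B * y ^ p) {ζ : ℝ} (hζ : 0 ≤ ζ) :
    ψ ζ ≤ B * max c ζ ^ p := by
  rcases le_total c ζ with h | h
  · rw [max_eq_right h]
    exact hub ζ h
  · rw [max_eq_left h]
    exact (hψ hζ hc h).trans (hub c le_rfl)

lemma integral_shift_rpow_add_rpow {p : ℝ} (hp : -1 < p) (y c ξ : ℝ) :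
    ∫ ζ in y..y + ξ, ((ζ + (c - y)) ^ p + ζ ^ p) =
      ((c + ξ) ^ (p + 1) - c ^ (p + 1) + (y + ξ) ^ (p + 1) - y ^ (p + 1)) / (p + 1) := by
  have hshift : ∫ ζ in y..y + ξ, (ζ + (c - y)) ^ p =
      ((c + ξ) ^ (p + 1) - c ^ (p + 1)) / (p + 1) := by
    rw [integral_comp_add_right (fun x : ℝ ↦ x ^ p), integral_rpow (Or.inl hp)]
    ring_nf
  have hshift_int : IntervalIntegrable (fun ζ ↦ (ζ + (c - y)) ^ p) volume y (y + ξ) := by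
    convert (intervalIntegrable_rpow' hp (a := c) (b := c + ξ)).comp_add_right (c - y) using 1 <;>
      ring
  rw [integral_add hshift_int (intervalIntegrable_rpow' hp),
    hshift, integral_rpow (Or.inl hp)]
  ring

lemma MonotoneOn.intervalIntegrable_of_nonneg {ψ : ℝ → ℝ} (hψ : MonotoneOn ψ (Set.Ici 0))
    {a b : ℝ} (ha : 0 ≤ a) (hab : a ≤ b) : IntervalIntegrable ψ volume a b := by
  refine (hψ.mono ?_).intervalIntegrable
  rw [Set.uIcc_of_le hab]
  exact fun ζ hζ ↦ ha.trans hζ.1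

theorem MonotoneOn.integral_le_of_le_mul_rpow {ψ : ℝ → ℝ} {B p c : ℝ}
    (hψ : MonotoneOn ψ (Set.Ici 0)) (hc : 0 ≤ c) (hB : 0 ≤ B) (hp : 0 ≤ p)
    (hub : ∀ y, c ≤ y → ψ y ≤ B * y ^ p) {y ξ : ℝ} (hy : 0 ≤ y) (hξ : 0 ≤ ξ) :
    ∫ ζ in y..y + ξ, ψ ζ ≤
      B / (p + 1) * ((c + ξ) ^ (p + 1) - c ^ (p + 1) + (y + ξ) ^ (p + 1) - y ^ (p + 1)) := by
  have hpoint : ∀ ζ ∈ Set.Icc y (y + ξ), ψ ζ ≤ B * ((ζ + (c - y)) ^ p + ζ ^ p) := by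
    rintro ζ ⟨hyζ, -⟩
    calc ψ ζ ≤ B * max c ζ ^ p := hψ.le_mul_max_rpow hc hub (hy.trans hyζ)
      _ ≤ B * max (ζ + (c - y)) ζ ^ p := by
        gcongr
        linarith
      _ ≤ B * ((ζ + (c - y)) ^ p + ζ ^ p) := by
        gcongr
        exact max_rpow_le_rpow_add_rpow (by linarith) (hy.trans hyζ) p
  have hbound_int : IntervalIntegrable (fun ζ ↦ B * ((ζ + (c - y)) ^ p + ζ ^ p)) volume y (y + ξ) :=
    ((continuous_id.add continuous_const).rpow_const (fun _ ↦ Or.inr hp)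
      |>.add (continuous_id.rpow_const fun _ ↦ Or.inr hp) |>.const_mul B).intervalIntegrable _ _
  calc ∫ ζ in y..y + ξ, ψ ζ ≤ ∫ ζ in y..y + ξ, B * ((ζ + (c - y)) ^ p + ζ ^ p) :=
        integral_mono_on (by linarith) (hψ.intervalIntegrable_of_nonneg hy (by linarith))
          hbound_int hpoint
    _ = _ := by
      rw [intervalIntegral.integral_const_mul, integral_shift_rpow_add_rpow (by linarith)]
      ring

theorem stmt6_general (ψ : ℝ → ℝ) (b β c : ℝ)
    (hb : 0 < b) (hβ : 0 < β) (hc : 0 < c)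
    (hψ_mono : MonotoneOn ψ (Set.Ici 0))
    (hψ_ub : ∀ y : ℝ, c ≤ y → ψ y ≤ b ^ (1 / β) * y ^ (1 / β))
    (Φ : ℝ → ℝ)
    (hΦ : ∀ y : ℝ, Φ y = ∫ ζ in (0:ℝ)..y, ψ ζ) :
    ∀ y ξ : ℝ, 0 ≤ y → 0 ≤ ξ →
      Φ (y + ξ) - Φ y ≤ (β / (β + 1)) * b ^ (1 / β) *
        ((c + ξ) ^ ((β + 1) / β) - c ^ ((β + 1) / β)
          + (y + ξ) ^ ((β + 1) / β) - y ^ ((β + 1) / β)) := by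
  intro y ξ hy hξ
  have hexp : (β + 1) / β = 1 / β + 1 := by field_simp; ring
  have hcoef : β / (β + 1) * b ^ (1 / β) = b ^ (1 / β) / (1 / β + 1) := by
    field_simp
    ring
  rw [hΦ, hΦ, integral_interval_sub_left
    (hψ_mono.intervalIntegrable_of_nonneg le_rfl (by linarith))
    (hψ_mono.intervalIntegrable_of_nonneg le_rfl hy), hexp, hcoef]
  exact hψ_mono.integral_le_of_le_mul_rpow hc.le (Real.rpow_nonneg hb.le _) (by positivity)
    hψ_ub hy hξ

/-- Let `ψ : ℝ≥0 → ℝ≥0` be non-decreasing and suppose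
`ψ y ≤ b^(1/β) * y^(1/β)` for all `y ≥ c`, where `b, β, c > 0`.  Define
`Φ y := ∫ ζ in 0..y, ψ ζ`.  Then for all `y, ξ ≥ 0`:
`Φ (y+ξ) − Φ y ≤ (β/(β+1)) * b^(1/β) * ((c+ξ)^((β+1)/β) − c^((β+1)/β)
  + (y+ξ)^((β+1)/β) − y^((β+1)/β))`. -/
theorem stmt6 (ψ : ℝ → ℝ) (b β c : ℝ)
    (hb : 0 < b) (hβ : 0 < β) (hc : 0 < c)
    (hψ_nonneg : ∀ x, 0 ≤ x → 0 ≤ ψ x)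
    (hψ_mono : MonotoneOn ψ (Set.Ici 0))
    (hψ_int : ∀ y : ℝ, 0 ≤ y → IntegrableOn ψ (Set.Icc 0 y))
    (hψ_ub : ∀ y : ℝ, c ≤ y → ψ y ≤ b ^ (1 / β) * y ^ (1 / β))
    (Φ : ℝ → ℝ)
    (hΦ : ∀ y : ℝ, Φ y = ∫ ζ in (0:ℝ)..y, ψ ζ) :
    ∀ y ξ : ℝ, 0 ≤ y → 0 ≤ ξ →
      Φ (y + ξ) - Φ y ≤ (β / (β + 1)) * b ^ (1 / β) *
        ((c + ξ) ^ ((β + 1) / β) - c ^ ((β + 1) / β)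
          + (y + ξ) ^ ((β + 1) / β) - y ^ ((β + 1) / β)) :=
  stmt6_general ψ b β c hb hβ hc hψ_mono hψ_ub Φ hΦ
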